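/- Let f = x_i^{u_i} x_j^{u_j} − x_k^{u_k} x_l^{u_l} ∈ I_A with i, j, k, l pairwise distinct, u_i < c_i, u_j < c_j, u_k > 0 and u_l > 0. If the monomial x_k^{u_k} x_l^{u_l} is an indispensable monomial of J = I_A ∩ k[x_i,x_j,x_k,x_l], then f is an indispensable binomial of J. -/

import Mathlib

open MvPolynomial Finsupp

variable (K : Type*) [Field K]

/-- The `A`-degree of an exponent vector `u ∈ ℕ^n` with respect to `a_1, …, a_n ∈ ℕ`, namely
`∑ i, u i * a i`. -/
def degN {n : ℕ} (a : Fin n → ℕ) (u : Fin n →₀ ℕ) : ℕ :=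
  ∑ i, u i * a i

/-- The defining ideal `I_A` of the monomial curve `x_i = t^{a_i}`: the ideal generated by all
binomials `x^u - x^v` with `∑ u_i a_i = ∑ v_i a_i` (equivalently, the kernel of
`k[x_1,…,x_n] → k[t]`, `x_i ↦ t^{a_i}`). -/
noncomputable def curveIdeal {n : ℕ} (a : Fin n → ℕ) : Ideal (MvPolynomial (Fin n) K) :=
  Ideal.span { f | ∃ u v : Fin n →₀ ℕ, degN a u = degN a v ∧
    f = monomial u (1 : K) - monomial v (1 : K) }

/-- `c` is the critical exponent of the variable `x_i`: the least positive integer `c` with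
`c * a_i ∈ ∑_{j ≠ i} ℕ a_j`. -/
def IsCritExp {n : ℕ} (a : Fin n → ℕ) (i : Fin n) (c : ℕ) : Prop :=
  IsLeast { m : ℕ | 0 < m ∧ ∃ u : Fin n →₀ ℕ, u i = 0 ∧ m * a i = degN a u } c

/-- `f` is a critical binomial of `I_A` with respect to `x_i` (where `c` is the vector of
critical exponents): `f = x_i^{c_i} - ∏_{j ≠ i} x_j^{u_{ij}} ∈ I_A`. -/
def IsCritBinom {n : ℕ} (a c : Fin n → ℕ) (i : Fin n) (f : MvPolynomial (Fin n) K) : Prop :=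
  ∃ u : Fin n →₀ ℕ, u i = 0 ∧
    f = monomial (Finsupp.single i (c i)) (1 : K) - monomial u (1 : K) ∧
    f ∈ curveIdeal K a

/-- The critical ideal `C_A`: the ideal generated by all critical binomials of `I_A`. -/
noncomputable def criticalIdeal {n : ℕ} (a c : Fin n → ℕ) :
    Ideal (MvPolynomial (Fin n) K) :=
  Ideal.span { f | ∃ i : Fin n, IsCritBinom K a c i f }

/-- `S` is a set of binomials generating `J`. -/
def IsBinomGenSet {σ : Type*} (J : Ideal (MvPolynomial σ K)) (S : Set (MvPolynomial σ K)) :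
    Prop :=
  (∀ f ∈ S, ∃ u v : σ →₀ ℕ, f = monomial u (1 : K) - monomial v (1 : K)) ∧
  Ideal.span S = J

/-- The monomial `x^u` is an indispensable monomial of `J`: every set of binomials generating `J`
contains a binomial one of whose monomials is `x^u`. -/
def IndispMonomial {σ : Type*} (J : Ideal (MvPolynomial σ K)) (u : σ →₀ ℕ) : Prop :=
  ∀ S : Set (MvPolynomial σ K), IsBinomGenSet K J S → ∃ f ∈ S, u ∈ f.support

/-- `f` is an indispensable binomial of `J`: every set of binomials generating `J` contains
`f` or `-f`. -/
def IndispBinomial {σ : Type*} (J : Ideal (MvPolynomial σ K)) (f : MvPolynomial σ K) : Prop :=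
  ∀ S : Set (MvPolynomial σ K), IsBinomGenSet K J S → f ∈ S ∨ -f ∈ S

/-- `x^u - x^v` is a primitive binomial of `I_A`: it is a nonzero binomial of `I_A` and there is
no other nonzero binomial `x^{u'} - x^{v'} ∈ I_A` with `x^{u'} ∣ x^u` and `x^{v'} ∣ x^v`. -/
def IsPrimitive {n : ℕ} (a : Fin n → ℕ) (u v : Fin n →₀ ℕ) : Prop :=
  u ≠ v ∧ (monomial u (1 : K) - monomial v (1 : K)) ∈ curveIdeal K a ∧
  ∀ u' v' : Fin n →₀ ℕ, u' ≤ u → v' ≤ v → u' ≠ v' →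
    (monomial u' (1 : K) - monomial v' (1 : K)) ∈ curveIdeal K a → u' = u ∧ v' = v

/-!
Since `x^v = x_k^{u_k} x_l^{u_l}` is indispensable, no other monomial `x^m` of the same
`A`-degree shares a variable `x_t` with it: otherwise `x^v - x^m = x_t (x^{v-e_t} - x^{m-e_t})`,
and replacing every binomial through `x^v` by the single binomial `x^{v-e_t} - x^{m-e_t}` would
still generate `J`. So any binomial `x^w - x^v ∈ J` has `w` supported on `{i, j}`, and the
minimality of the critical exponents `c_i > u_i`, `c_j > u_j` forces `w = (u_i, u_j)`. Hence every
binomial generating set, which must contain a binomial through `x^v`, contains `±f`.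
-/

section Degree

variable {n : ℕ} (a : Fin n → ℕ)

lemma degN_add (u v : Fin n →₀ ℕ) : degN a (u + v) = degN a u + degN a v := by
  simp [degN, add_mul, Finset.sum_add_distrib]

lemma degN_single (i : Fin n) (m : ℕ) : degN a (Finsupp.single i m) = m * a i := by
  simp [degN, Finsupp.single_apply]

lemma aeval_X_pow_monomial (u : Fin n →₀ ℕ) :
    aeval (fun t => (Polynomial.X : Polynomial K) ^ a t) (monomial u (1 : K)) =
      Polynomial.X ^ degN a u := by
  rw [aeval_monomial, map_one, one_mul, Finsupp.prod]
  simp_rw [← pow_mul]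
  rw [Finset.prod_pow_eq_pow_sum, degN,
    Finset.sum_subset u.support.subset_univ fun t _ ht => by simp [Finsupp.notMem_support_iff.mp ht]]
  simp_rw [mul_comm]

lemma curveIdeal_le_ker_aeval :
    curveIdeal K a ≤ RingHom.ker (aeval (fun t => (Polynomial.X : Polynomial K) ^ a t)) := by
  rw [curveIdeal, Ideal.span_le]
  rintro f ⟨u, v, huv, rfl⟩
  simp [aeval_X_pow_monomial, huv]

variable {K}

lemma degN_eq_of_mem_curveIdeal {u v : Fin n →₀ ℕ}
    (h : monomial u (1 : K) - monomial v (1 : K) ∈ curveIdeal K a) : degN a u = degN a v := by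
  have := curveIdeal_le_ker_aeval K a h
  rw [RingHom.mem_ker, map_sub, aeval_X_pow_monomial, aeval_X_pow_monomial, sub_eq_zero] at this
  simpa using congrArg Polynomial.natDegree this

end Degree

section Indispensable

variable {K} {σ : Type*}

lemma eq_or_eq_of_mem_support_monomial_sub_monomial {α β γ : σ →₀ ℕ}
    (h : γ ∈ (monomial α (1 : K) - monomial β (1 : K)).support) : γ = α ∨ γ = β := by
  classical
  contrapose! h
  simp [coeff_monomial, h.1.symm, h.2.symm]

lemma IndispMonomial.indispBinomial {J : Ideal (MvPolynomial σ K)} {u v : σ →₀ ℕ}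
    (hind : IndispMonomial K J v)
    (huniq : ∀ w, w ≠ v → monomial w (1 : K) - monomial v (1 : K) ∈ J → w = u) :
    IndispBinomial K J (monomial u (1 : K) - monomial v (1 : K)) := by
  intro S hS
  obtain ⟨f, hfS, hvf⟩ := hind S hS
  obtain ⟨w₁, w₂, rfl⟩ := hS.1 f hfS
  have hfJ : monomial w₁ (1 : K) - monomial w₂ 1 ∈ J := hS.2 ▸ Ideal.subset_span hfS
  have hne : w₁ ≠ w₂ := by
    rintro rfl
    simp at hvf
  rcases eq_or_eq_of_mem_support_monomial_sub_monomial hvf with rfl | rfl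
  · right
    rwa [← huniq w₂ hne.symm (by simpa using neg_mem hfJ), neg_sub]
  · left
    rwa [← huniq w₁ hne hfJ]

end Indispensable

section Avoiding

variable {N : ℕ} (b : Fin N → ℕ)

def binomialsAvoiding (v : Fin N →₀ ℕ) : Set (MvPolynomial (Fin N) K) :=
  {f | ∃ α β : Fin N →₀ ℕ, degN b α = degN b β ∧ α ≠ v ∧ β ≠ v ∧
    f = monomial α (1 : K) - monomial β (1 : K)}

variable {K b}

lemma span_binomialsAvoiding_union_eq_curveIdeal {v m : Fin N →₀ ℕ}
    (hm : degN b m = degN b v) (hmv : m ≠ v) {g : MvPolynomial (Fin N) K}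
    (hg : g ∈ curveIdeal K b) (hvm : monomial v (1 : K) - monomial m (1 : K) ∈ Ideal.span {g}) :
    Ideal.span (binomialsAvoiding K b v ∪ {g}) = curveIdeal K b := by
  set I := Ideal.span (binomialsAvoiding K b v ∪ {g})
  have hvmI : monomial v (1 : K) - monomial m 1 ∈ I :=
    Ideal.span_mono Set.subset_union_right hvm
  have to_v : ∀ γ, degN b γ = degN b v → monomial γ (1 : K) - monomial v 1 ∈ I := by
    intro γ hγ
    by_cases hγv : γ = v
    · simp [hγv]
    have hγm : monomial γ (1 : K) - monomial m 1 ∈ I :=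
      Ideal.subset_span (Or.inl ⟨γ, m, hγ.trans hm.symm, hγv, hmv, rfl⟩)
    simpa using add_mem hγm (neg_mem hvmI)
  apply le_antisymm
  · rw [Ideal.span_le, Set.union_subset_iff, Set.singleton_subset_iff]
    refine ⟨?_, hg⟩
    rintro f ⟨α, β, hαβ, -, -, rfl⟩
    exact Ideal.subset_span ⟨α, β, hαβ, rfl⟩
  · rw [curveIdeal, Ideal.span_le]
    rintro f ⟨α, β, hαβ, rfl⟩
    by_cases hα : α = v
    · subst hα
      simpa using neg_mem (to_v β hαβ.symm)
    by_cases hβ : β = v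
    · subst hβ
      exact to_v α hαβ
    exact Ideal.subset_span (Or.inl ⟨α, β, hαβ, hα, hβ, rfl⟩)

lemma IndispMonomial.apply_eq_zero_of_degN_eq {v m : Fin N →₀ ℕ}
    (hind : IndispMonomial K (curveIdeal K b) v) (hm : degN b m = degN b v) (hmv : m ≠ v)
    {t : Fin N} (hbt : 0 < b t) (hvt : 0 < v t) : m t = 0 := by
  by_contra hmt
  set e : Fin N →₀ ℕ := Finsupp.single t 1
  have hev : e ≤ v := Finsupp.single_le_iff.2 hvt
  have hem : e ≤ m := Finsupp.single_le_iff.2 (Nat.pos_of_ne_zero hmt)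
  have hdeg : ∀ w, e ≤ w → degN b (w - e) + b t = degN b w := fun w hw => by
    rw [← one_mul (b t), ← degN_single, ← degN_add, tsub_add_cancel_of_le hw]
  set g : MvPolynomial (Fin N) K := monomial (v - e) 1 - monomial (m - e) 1
  have hgJ : g ∈ curveIdeal K b :=
    Ideal.subset_span ⟨v - e, m - e, by linarith [hdeg v hev, hdeg m hem], rfl⟩
  have hvm : monomial v (1 : K) - monomial m 1 ∈ Ideal.span {g} := by
    have : monomial e (1 : K) * g = monomial v 1 - monomial m 1 := by
      rw [mul_sub, monomial_mul, monomial_mul, one_mul, add_tsub_cancel_of_le hev,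
        add_tsub_cancel_of_le hem]
    exact this ▸ Ideal.mul_mem_left _ _ (Ideal.mem_span_singleton_self g)
  have hgen : IsBinomGenSet K (curveIdeal K b) (binomialsAvoiding K b v ∪ {g}) := by
    refine ⟨?_, span_binomialsAvoiding_union_eq_curveIdeal hm hmv hgJ hvm⟩
    rintro f (⟨α, β, -, -, -, rfl⟩ | rfl)
    exacts [⟨α, β, rfl⟩, ⟨v - e, m - e, rfl⟩]
  obtain ⟨f, hfS, hvf⟩ := hind _ hgen
  rcases hfS with ⟨α, β, -, hα, hβ, rfl⟩ | rfl
  · rcases eq_or_eq_of_mem_support_monomial_sub_monomial hvf with h | h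
    exacts [hα h.symm, hβ h.symm]
  · rcases eq_or_eq_of_mem_support_monomial_sub_monomial hvf with h | h
    · have := congrArg (· t) h
      simp [e] at this
      omega
    · have := hdeg m hem
      rw [← h] at this
      omega

end Avoiding

section Critical

variable {n : ℕ} {a c : Fin n → ℕ}

lemma IsCritExp.le_sub_of_lt {i j : Fin n} {ci : ℕ} (hc : IsCritExp a i ci) (hij : i ≠ j)
    (hai : 0 < a i) {u₀ u₁ w₀ w₁ : ℕ} (h : w₀ * a i + w₁ * a j = u₀ * a i + u₁ * a j)
    (hlt : w₀ < u₀) : ci ≤ u₀ - w₀ := by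
  have hmul := Nat.mul_lt_mul_of_pos_right hlt hai
  refine hc.2 ⟨by omega, Finsupp.single j (w₁ - u₁), Finsupp.single_eq_of_ne hij, ?_⟩
  rw [degN_single, Nat.sub_mul, Nat.sub_mul]
  omega

lemma eq_of_mul_add_mul_eq_of_lt_critExp (ha : ∀ i, 0 < a i) (hc : ∀ i, IsCritExp a i (c i))
    {i j : Fin n} (hij : i ≠ j) {u₀ u₁ w₀ w₁ : ℕ} (hu₀ : u₀ < c i) (hu₁ : u₁ < c j)
    (h : w₀ * a i + w₁ * a j = u₀ * a i + u₁ * a j) : w₀ = u₀ ∧ w₁ = u₁ := by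
  have h₀ : u₀ ≤ w₀ := by
    by_contra! hlt
    have := (hc i).le_sub_of_lt hij (ha i) h hlt
    omega
  have h₁ : u₁ ≤ w₁ := by
    by_contra! hlt
    have := (hc j).le_sub_of_lt hij.symm (ha j)
      (by linarith : w₁ * a j + w₀ * a i = u₁ * a j + u₀ * a i) hlt
    omega
  have := Nat.mul_le_mul_right (a i) h₀
  have := Nat.mul_le_mul_right (a j) h₁
  exact ⟨Nat.eq_of_mul_eq_mul_right (ha i) (by omega),
    Nat.eq_of_mul_eq_mul_right (ha j) (by omega)⟩

end Critical

theorem statement15 {n : ℕ} (a c : Fin n → ℕ) (ha : ∀ i, 0 < a i)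
    (hc : ∀ i, IsCritExp a i (c i))
    (i j k l : Fin n) (hij : i ≠ j) (ui uj uk ul : ℕ)
    (hmem : (monomial (Finsupp.single i ui + Finsupp.single j uj) (1 : K) -
        monomial (Finsupp.single k uk + Finsupp.single l ul) (1 : K)) ∈ curveIdeal K a)
    (hi : ui < c i) (hj : uj < c j) (hk : 0 < uk) (hl : 0 < ul)
    (hind : IndispMonomial K (curveIdeal K ![a i, a j, a k, a l])
      (Finsupp.single (2 : Fin 4) uk + Finsupp.single (3 : Fin 4) ul)) :
    IndispBinomial K (curveIdeal K ![a i, a j, a k, a l])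
      (monomial (Finsupp.single (0 : Fin 4) ui + Finsupp.single (1 : Fin 4) uj) (1 : K) -
        monomial (Finsupp.single (2 : Fin 4) uk + Finsupp.single (3 : Fin 4) ul) (1 : K)) := by
  have hdeg := degN_eq_of_mem_curveIdeal a hmem
  simp only [degN_add, degN_single] at hdeg
  refine hind.indispBinomial fun w hwv hw => ?_
  have hwdeg := degN_eq_of_mem_curveIdeal _ hw
  have hw₂ : w 2 = 0 := hind.apply_eq_zero_of_degN_eq hwdeg hwv (ha k) (by simpa using hk)
  have hw₃ : w 3 = 0 := hind.apply_eq_zero_of_degN_eq hwdeg hwv (ha l) (by simpa using hl)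
  simp only [degN, Fin.sum_univ_four, hw₂, hw₃] at hwdeg
  obtain ⟨hw₀, hw₁⟩ := eq_of_mul_add_mul_eq_of_lt_critExp ha hc hij hi hj
    (by simpa [hdeg] using hwdeg)
  ext t
  fin_cases t <;> simp [hw₀, hw₁, hw₂, hw₃]
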